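/- Fix k ≥ 0 and d ≥ q - 1 for each q. As q → ∞ over prime powers, the probability that a uniformly random polynomial in F_q[x] of degree at most d has exactly k distinct roots in F_q converges to e^{-1}/k! (the Poisson(1) distribution). -/

import Mathlib

open Finset

/-- The number of distinct zeros in `F` of the polynomial with coefficient vector
`c : Fin (d+1) → F`. -/
def zeroCount {F : Type} [Field F] [Fintype F] [DecidableEq F] {d : ℕ}
    (c : Fin (d + 1) → F) : ℕ :=
  (univ.filter (fun a : F => ∑ i : Fin (d + 1), c i * a ^ (i : ℕ) = 0)).card

section Aux

open Polynomial

variable {F : Type} [Field F] [Fintype F] [DecidableEq F] {d : ℕ}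

/-- evaluation of the polynomial with coefficients `c`. -/
def evalMap (c : Fin (d + 1) → F) : F → F := fun a => ∑ i : Fin (d + 1), c i * a ^ (i : ℕ)

lemma evalMap_surj (h : Fintype.card F ≤ d + 1) : Function.Surjective (evalMap (F := F) (d := d)) := by
  intro g
  set P := Lagrange.interpolate Finset.univ id g with hP
  have hinj : Set.InjOn (id : F → F) (Finset.univ : Finset F) := Function.injective_id.injOn
  have hdeg : P.natDegree < d + 1 := by
    by_cases h0 : P = 0
    · simp [h0]
    · have := Lagrange.degree_interpolate_lt (r := g) hinj
      rw [← hP] at this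
      have h2 : P.natDegree < Fintype.card F := by
        rw [Finset.card_univ, ← Polynomial.natDegree_lt_iff_degree_lt h0] at this
        exact_mod_cast this
      omega
  refine ⟨fun i => P.coeff i, funext fun a => ?_⟩
  have := Polynomial.eval_eq_sum_range' hdeg a
  rw [evalMap, Fin.sum_univ_eq_sum_range (fun i => P.coeff i * a ^ i), ← this]
  exact (Lagrange.eval_interpolate_at_node g hinj (Finset.mem_univ a))

lemma evalMap_fiber_card (h : Fintype.card F ≤ d + 1) (g : F → F) :
    (univ.filter (fun c : Fin (d + 1) → F => evalMap c = g)).card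
      = (univ.filter (fun c : Fin (d + 1) → F => evalMap c = 0)).card := by
  obtain ⟨c₀, hc₀⟩ := evalMap_surj h g
  have hadd : ∀ c c' : Fin (d + 1) → F, evalMap (F := F) (c + c') = evalMap c + evalMap c' := by
    intro c c'
    funext a
    simp [evalMap, add_mul, Finset.sum_add_distrib]
  have hsub : ∀ c c' : Fin (d + 1) → F, evalMap (F := F) (c - c') = evalMap c - evalMap c' := by
    intro c c'
    funext a
    simp [evalMap, sub_mul, Finset.sum_sub_distrib]
  refine Finset.card_bij' (fun c _ => c - c₀) (fun c _ => c + c₀) ?_ ?_ ?_ ?_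
  · intro c hc
    simp only [mem_filter, mem_univ, true_and] at hc ⊢
    rw [hsub, hc, hc₀]; simp
  · intro c hc
    simp only [mem_filter, mem_univ, true_and] at hc ⊢
    rw [hadd, hc, hc₀]; simp
  · intro c _; simp
  · intro c _; simp

lemma card_S (k : ℕ) :
    (univ.filter (fun g : F → F => (univ.filter (fun a => g a = 0)).card = k)).card
      = (Fintype.card F).choose k * (Fintype.card F - 1) ^ (Fintype.card F - k) := by
  rw [Finset.card_eq_sum_card_fiberwise
    (f := fun g : F → F => univ.filter (fun a => g a = 0))
    (t := Finset.powersetCard k univ)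
    (fun g hg => by
      simp only [Finset.mem_coe, mem_filter, mem_univ, true_and] at hg
      exact Finset.mem_powersetCard.2 ⟨Finset.subset_univ _, hg⟩)]
  have hfib : ∀ Z ∈ Finset.powersetCard k univ,
      ((univ.filter (fun g : F → F => (univ.filter (fun a => g a = 0)).card = k)).filter
        (fun g => univ.filter (fun a => g a = 0) = Z)).card
      = (Fintype.card F - 1) ^ (Fintype.card F - k) := by
    intro Z hZ
    obtain ⟨-, hZk⟩ := Finset.mem_powersetCard.1 hZ
    have h1 : ((univ.filter (fun g : F → F => (univ.filter (fun a => g a = 0)).card = k)).filter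
        (fun g => univ.filter (fun a => g a = 0) = Z))
        = Fintype.piFinset (fun a : F => if a ∈ Z then ({0} : Finset F) else {0}ᶜ) := by
      ext g
      simp only [Finset.filter_filter, mem_filter, mem_univ, true_and,
        Fintype.mem_piFinset]
      constructor
      · rintro ⟨-, rfl⟩
        intro a
        by_cases ha : g a = 0 <;> simp [ha]
      · intro hg
        have hZeq : univ.filter (fun a => g a = 0) = Z := by
          ext a
          have := hg a
          by_cases ha : a ∈ Z <;> simp [ha] at this ⊢ <;> assumption
        exact ⟨by rw [hZeq, hZk], hZeq⟩
    rw [h1, Fintype.card_piFinset]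
    have : ∀ a : F, ((if a ∈ Z then ({0} : Finset F) else {0}ᶜ)).card
        = if a ∈ Z then 1 else Fintype.card F - 1 := by
      intro a
      by_cases ha : a ∈ Z <;> simp [ha, Finset.card_compl]
    rw [Finset.prod_congr rfl (fun a _ => this a), Finset.prod_ite, Finset.prod_const,
      Finset.prod_const]
    have hfz : univ.filter (fun a : F => a ∈ Z) = Z := by ext a; simp
    have hfnz : (univ.filter (fun a : F => ¬ a ∈ Z)) = Zᶜ := by ext a; simp
    rw [hfz, hfnz, one_pow, one_mul, Finset.card_compl, hZk]
  rw [Finset.sum_congr rfl hfib, Finset.sum_const, Finset.card_powersetCard,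
    Finset.card_univ, smul_eq_mul]

lemma prob_eq (k : ℕ) (h : Fintype.card F ≤ d + 1) :
    ((univ.filter (fun c : Fin (d + 1) → F => zeroCount c = k)).card : ℝ) /
        (Fintype.card F : ℝ) ^ (d + 1)
      = (((Fintype.card F).choose k * (Fintype.card F - 1) ^ (Fintype.card F - k) : ℕ) : ℝ) /
        (Fintype.card F : ℝ) ^ (Fintype.card F) := by
  classical
  set q := Fintype.card F with hq
  set K := (univ.filter (fun c : Fin (d + 1) → F => evalMap c = 0)).card with hK
  set S := univ.filter (fun g : F → F => (univ.filter (fun a => g a = 0)).card = k) with hS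
  have hmem : ∀ c : Fin (d + 1) → F, (evalMap c ∈ S ↔ zeroCount c = k) := by
    intro c
    simp only [hS, Finset.mem_filter, Finset.mem_univ, true_and]
    exact Iff.rfl
  have h1 : (univ.filter (fun c : Fin (d + 1) → F => zeroCount c = k)).card = S.card * K := by
    rw [Finset.card_eq_sum_card_fiberwise (f := fun c => evalMap c) (t := S)
      (fun c hc => (hmem c).2 (by simpa using hc))]
    rw [Finset.sum_congr rfl (fun g hg => ?_), Finset.sum_const, smul_eq_mul]
    have : (univ.filter (fun c : Fin (d + 1) → F => zeroCount c = k)).filter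
        (fun c => evalMap c = g) = univ.filter (fun c => evalMap c = g) := by
      ext c
      simp only [Finset.filter_filter, mem_filter, mem_univ, true_and]
      constructor
      · rintro ⟨-, rfl⟩; rfl
      · rintro rfl; exact ⟨(hmem c).1 hg, rfl⟩
    rw [this, evalMap_fiber_card h]
  have h2 : q ^ q * K = q ^ (d + 1) := by
    have := Finset.card_eq_sum_card_fiberwise (f := fun c : Fin (d + 1) → F => evalMap c)
      (s := univ) (t := univ) (fun c _ => Finset.mem_univ _)
    rw [Finset.sum_congr rfl (fun g _ => evalMap_fiber_card h g), Finset.sum_const,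
      smul_eq_mul, Finset.card_univ, Finset.card_univ, Fintype.card_fun,
      Fintype.card_fun, Fintype.card_fin] at this
    rw [← this]
  have hK0 : (K : ℝ) ≠ 0 := by
    have : 0 < q ^ (d + 1) := pow_pos Fintype.card_pos _
    rw [← h2] at this
    have : K ≠ 0 := by rintro h0; rw [h0, mul_zero] at this; omega
    exact_mod_cast this
  have h3 : S.card = q.choose k * (q - 1) ^ (q - k) := card_S k
  have h4 : ((q : ℝ)) ^ (d + 1) = (q : ℝ) ^ q * (K : ℝ) := by exact_mod_cast h2.symm
  rw [h1, h3, Nat.cast_mul, h4, mul_div_mul_right _ _ hK0]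

lemma cancel_aux (C fk A B : ℝ) (k m : ℕ) (hf0 : fk ≠ 0) (hA : A ≠ 0) (hB : B ≠ 0) :
    C * fk * fk⁻¹ * A⁻¹ ^ k * B⁻¹ ^ (k * 2) * B⁻¹ ^ m * A ^ k * A ^ m * B ^ (k * 2) * B ^ m
      = C * A ^ m := by
  have h1 : A ^ k ≠ 0 := pow_ne_zero _ hA
  have h2 : B ^ (k * 2) ≠ 0 := pow_ne_zero _ hB
  have h3 : B ^ m ≠ 0 := pow_ne_zero _ hB
  simp only [inv_pow]
  field_simp

set_option maxHeartbeats 1000000 in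
open Filter in
lemma partB (k : ℕ) :
    Filter.Tendsto (fun q : ℕ => ((q.choose k * (q - 1) ^ (q - k) : ℕ) : ℝ) / (q : ℝ) ^ q)
      Filter.atTop (nhds (Real.exp (-1) / Nat.factorial k)) := by
  have hA : Tendsto (fun q : ℕ => (q.descFactorial k : ℝ) / (q : ℝ) ^ k) atTop (nhds 1) := by
    have hprod : Tendsto (fun q : ℕ => ∏ i ∈ Finset.range k, (1 - (i : ℝ) / q)) atTop
        (nhds (∏ i ∈ Finset.range k, (1 : ℝ))) := by
      refine tendsto_finset_prod _ fun i _ => ?_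
      simpa using tendsto_const_nhds.sub (tendsto_const_div_atTop_nhds_zero_nat (i : ℝ))
    rw [Finset.prod_const_one] at hprod
    refine hprod.congr' ?_
    filter_upwards [eventually_ge_atTop (k + 1)] with q hq
    have hq0 : (q : ℝ) ≠ 0 := Nat.cast_ne_zero.2 (by omega)
    rw [Nat.descFactorial_eq_prod_range, Nat.cast_prod,
      show ((q : ℝ)) ^ k = ∏ _i ∈ Finset.range k, (q : ℝ) by simp [Finset.prod_const],
      ← Finset.prod_div_distrib]
    refine Finset.prod_congr rfl fun i hi => ?_
    have hik : i < k := Finset.mem_range.1 hi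
    rw [Nat.cast_sub (by omega)]
    field_simp
  have h1q : Tendsto (fun q : ℕ => 1 - 1 / (q : ℝ)) atTop (nhds 1) := by
    simpa using tendsto_const_nhds.sub (tendsto_one_div_atTop_nhds_zero_nat (𝕜 := ℝ))
  have hB : Tendsto (fun q : ℕ => (1 - 1 / (q : ℝ)) ^ q) atTop (nhds (Real.exp (-1))) := by
    refine (Real.tendsto_one_add_div_pow_exp (-1)).congr fun q => ?_
    ring_nf
  have hC : Tendsto (fun q : ℕ => (1 - 1 / (q : ℝ)) ^ k) atTop (nhds 1) := by
    simpa using h1q.pow k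
  have hmain := ((hA.div_const (k.factorial : ℝ)).mul (hB.div hC one_ne_zero))
  simp only [Pi.div_apply] at hmain
  have : (1 : ℝ) / (k.factorial : ℝ) * (Real.exp (-1) / 1) = Real.exp (-1) / k.factorial := by
    rw [div_one, one_div, inv_mul_eq_div]
  rw [this] at hmain
  refine hmain.congr' ?_
  filter_upwards [eventually_ge_atTop (k + 2)] with q hq
  obtain ⟨m, rfl⟩ : ∃ m, q = k + m := ⟨q - k, by omega⟩
  have hq0 : ((k + m : ℕ) : ℝ) ≠ 0 := Nat.cast_ne_zero.2 (by omega)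
  have hq1 : (1 : ℝ) ≤ ((k + m : ℕ) : ℝ) := by exact_mod_cast Nat.one_le_iff_ne_zero.2 (by omega)
  have hq1' : ((k + m : ℕ) : ℝ) - 1 ≠ 0 := by
    have : (2 : ℝ) ≤ ((k + m : ℕ) : ℝ) := by exact_mod_cast (by omega : 2 ≤ k + m)
    linarith
  have hCD : ((k + m).choose k : ℝ) * (k.factorial : ℝ) = ((k + m).descFactorial k : ℝ) := by
    exact_mod_cast congrArg (Nat.cast (R := ℝ))
      (by rw [Nat.descFactorial_eq_factorial_mul_choose]; ring)
  have hsub : (1 : ℝ) - 1 / ((k + m : ℕ) : ℝ) = (((k + m : ℕ) : ℝ) - 1) / ((k + m : ℕ) : ℝ) := by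
    rw [one_sub_div hq0]
  have hkk : k + m - k = m := by omega
  rw [Nat.cast_mul, Nat.cast_pow, Nat.cast_sub (by omega : 1 ≤ k + m), hkk, hsub,
    div_pow, div_pow, pow_add, pow_add]
  have hf0 : (k.factorial : ℝ) ≠ 0 := Nat.cast_ne_zero.2 k.factorial_ne_zero
  rw [← hCD]
  have hQ : ((k : ℝ) + ↑m) ≠ 0 := by push_cast at hq0; exact hq0
  have hQ1 : (-1 + (k : ℝ) + ↑m) ≠ 0 := by
    push_cast at hq1'
    intro h; exact hq1' (by linarith)
  field_simp
  have hS : ((k : ℝ) + ↑m - 1) ≠ 0 := by intro h; exact hQ1 (by linarith)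
  rw [Nat.cast_one]

end Aux

/-- As `q → ∞` (over finite fields, with `d ≥ q - 1`), the probability that a uniformly
random polynomial of degree at most `d` over `F_q` has exactly `k` distinct roots
converges to the Poisson(1) value `e⁻¹ / k!`. -/
theorem poisson_limit (k : ℕ) :
    ∀ ε : ℝ, 0 < ε → ∃ Q : ℕ,
      ∀ (F : Type) [Field F] [Fintype F] [DecidableEq F] (d : ℕ),
        Q ≤ Fintype.card F → Fintype.card F - 1 ≤ d →
        |((univ.filter (fun c : Fin (d + 1) → F => zeroCount c = k)).card : ℝ) /
            (Fintype.card F : ℝ) ^ (d + 1) - Real.exp (-1) / (Nat.factorial k)| < ε := by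
  intro ε hε
  obtain ⟨Q, hQ⟩ := Metric.tendsto_atTop.1 (partB k) ε hε
  refine ⟨Q, fun F _ _ _ d hQF hd => ?_⟩
  have hcard : Fintype.card F ≤ d + 1 := by
    have := Fintype.card_pos (α := F); omega
  rw [prob_eq k hcard]
  have := hQ (Fintype.card F) hQF
  rwa [Real.dist_eq] at this
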